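/- Let H be a real Hilbert space, a : H → H → ℝ bilinear with a(u,u) ≥ a_* ‖u‖² (a_* > 0) and a(u,v) ≤ a^* ‖u‖‖v‖, f ∈ H, ν > 0, η ≥ 0. Let K₁, K₂ ⊆ H be nonempty closed convex sets such that for i ≠ j and every u ∈ Kᵢ one has (ν/(ν+η)) u ∈ Kⱼ. If uᵢ ∈ Kᵢ solves a(uᵢ, v - uᵢ) ≥ ⟪f, v - uᵢ⟫ for all v ∈ Kᵢ (i=1,2), and M is a bound with ‖u₁‖, ‖u₂‖ ≤ M, then a_* ‖u₁ - u₂‖² ≤ (η/ν)(2 a^* M² + 2 ‖f‖ M). -/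

import Mathlib

open scoped RealInnerProductSpace

theorem holder_dependence_key_estimate
    {H : Type*} [NormedAddCommGroup H] [InnerProductSpace ℝ H]
    (a : H →ₗ[ℝ] H →ₗ[ℝ] ℝ) (aStar aLow : ℝ) (haLow : 0 < aLow) (haStar : 0 < aStar)
    (hcoer : ∀ u : H, aLow * ‖u‖ ^ 2 ≤ a u u)
    (hbound : ∀ u v : H, a u v ≤ aStar * ‖u‖ * ‖v‖)
    (f : H) (ν η : ℝ) (hν : 0 < ν) (hη : 0 ≤ η)
    (K₁ K₂ : Set H) (hK₁ne : K₁.Nonempty) (hK₂ne : K₂.Nonempty)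
    (hK₁cl : IsClosed K₁) (hK₂cl : IsClosed K₂)
    (hK₁co : Convex ℝ K₁) (hK₂co : Convex ℝ K₂)
    (hscale₁ : ∀ u ∈ K₁, (ν / (ν + η)) • u ∈ K₂)
    (hscale₂ : ∀ u ∈ K₂, (ν / (ν + η)) • u ∈ K₁)
    (u₁ u₂ : H) (hu₁ : u₁ ∈ K₁) (hu₂ : u₂ ∈ K₂)
    (hvi₁ : ∀ v ∈ K₁, ⟪f, v - u₁⟫ ≤ a u₁ (v - u₁))
    (hvi₂ : ∀ v ∈ K₂, ⟪f, v - u₂⟫ ≤ a u₂ (v - u₂))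
    (M : ℝ) (hM₁ : ‖u₁‖ ≤ M) (hM₂ : ‖u₂‖ ≤ M) :
    aLow * ‖u₁ - u₂‖ ^ 2 ≤ (η / ν) * (2 * aStar * M ^ 2 + 2 * ‖f‖ * M) := by
  classical
  have hνη : 0 < ν + η := by linarith
  set c : ℝ := ν / (ν + η) with hc
  have hc1 : 1 - c = η / (ν + η) := by rw [hc]; field_simp; ring
  have hM0 : 0 ≤ M := le_trans (norm_nonneg u₁) hM₁
  have h1 := hvi₁ (c • u₂) (hscale₂ u₂ hu₂)
  have h2 := hvi₂ (c • u₁) (hscale₁ u₁ hu₁)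
  have e1 : a u₁ (c • u₂ - u₁) = c * a u₁ u₂ - a u₁ u₁ := by
    simp [map_sub, map_smul, smul_eq_mul]
  have e2 : a u₂ (c • u₁ - u₂) = c * a u₂ u₁ - a u₂ u₂ := by
    simp [map_sub, map_smul, smul_eq_mul]
  have i1 : ⟪f, c • u₂ - u₁⟫ = c * ⟪f, u₂⟫ - ⟪f, u₁⟫ := by
    rw [inner_sub_right, real_inner_smul_right]
  have i2 : ⟪f, c • u₁ - u₂⟫ = c * ⟪f, u₁⟫ - ⟪f, u₂⟫ := by
    rw [inner_sub_right, real_inner_smul_right]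
  rw [e1, i1] at h1
  rw [e2, i2] at h2
  have hD : a (u₁ - u₂) (u₁ - u₂) = a u₁ u₁ - a u₁ u₂ - a u₂ u₁ + a u₂ u₂ := by
    simp [map_sub, LinearMap.sub_apply]; ring
  have hcoerD := hcoer (u₁ - u₂)
  rw [hD] at hcoerD
  -- lower bounds on bilinear form off-diagonal terms
  have hbig : ∀ w z : H, ‖w‖ ≤ M → ‖z‖ ≤ M → -(aStar * M ^ 2) ≤ a w z := by
    intro w z hw hz
    have h := hbound w (-z)
    rw [map_neg, norm_neg] at h
    have h' : aStar * ‖w‖ * ‖z‖ ≤ aStar * M * M :=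
      mul_le_mul (mul_le_mul_of_nonneg_left hw haStar.le) hz (norm_nonneg z)
        (by positivity)
    have hsq : M ^ 2 = M * M := sq M
    linarith
  have hb12 : -(aStar * M ^ 2) ≤ a u₁ u₂ := hbig u₁ u₂ hM₁ hM₂
  have hb21 : -(aStar * M ^ 2) ≤ a u₂ u₁ := hbig u₂ u₁ hM₂ hM₁
  -- bounds on inner products
  have hf1 : ⟪f, u₁⟫ ≤ ‖f‖ * M := by
    have h := real_inner_le_norm f u₁
    nlinarith [norm_nonneg f]
  have hf2 : ⟪f, u₂⟫ ≤ ‖f‖ * M := by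
    have h := real_inner_le_norm f u₂
    nlinarith [norm_nonneg f]
  have hcle : c ≤ 1 := by
    rw [hc, div_le_one hνη]; linarith
  have hc0 : 0 ≤ c := by positivity
  -- key estimate with factor (1 - c)
  have key : aLow * ‖u₁ - u₂‖ ^ 2 ≤ (1 - c) * (2 * aStar * M ^ 2 + 2 * ‖f‖ * M) := by
    linarith [mul_le_mul_of_nonneg_left hb12 (sub_nonneg.mpr hcle),
      mul_le_mul_of_nonneg_left hb21 (sub_nonneg.mpr hcle),
      mul_le_mul_of_nonneg_left hf1 (sub_nonneg.mpr hcle),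
      mul_le_mul_of_nonneg_left hf2 (sub_nonneg.mpr hcle)]
  have hfrac : (1 - c) ≤ η / ν := by
    rw [hc1]
    exact div_le_div_of_nonneg_left hη hν (by linarith)
  have hpos : 0 ≤ 2 * aStar * M ^ 2 + 2 * ‖f‖ * M := by positivity
  calc aLow * ‖u₁ - u₂‖ ^ 2 ≤ (1 - c) * (2 * aStar * M ^ 2 + 2 * ‖f‖ * M) := key
    _ ≤ (η / ν) * (2 * aStar * M ^ 2 + 2 * ‖f‖ * M) :=
      mul_le_mul_of_nonneg_right hfrac hpos
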